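/- Let k and n be integers with n/2 < k ≤ n. Then the (n−k+1)×(n−k+1) matrix M = M(k,n) whose (s,t)-entry is 1/(k+t−s)! for s, t ∈ {0,…,n−k} is nonsingular, i.e., det M ≠ 0. -/

import Mathlib

open Complex Metric Filter MeasureTheory

noncomputable section

/-- Membership in the analytic Lipschitz space `A^α` on the unit disk:
`f` is analytic and bounded on `𝔻`, and its derivative of order `m := ⌊α⌋ + 1`
satisfies `|f^(m)(z)| ≤ C (1 - |z|)^(α - m)`. -/
def MemA (α : ℝ) (f : ℂ → ℂ) : Prop :=
  DifferentiableOn ℂ f (ball (0:ℂ) 1) ∧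
  (∃ M : ℝ, ∀ z ∈ ball (0:ℂ) 1, ‖f z‖ ≤ M) ∧
  (∃ C : ℝ, ∀ z ∈ ball (0:ℂ) 1,
    ‖iteratedDeriv (⌊α⌋₊ + 1) f z‖ ≤
      C * (1 - ‖z‖) ^ (α - ((⌊α⌋₊ : ℝ) + 1)))

/-- Membership in `H^∞_N`: `f` is analytic on `𝔻` and both `f` and `f^(N)` are bounded there. -/
def MemH (N : ℕ) (f : ℂ → ℂ) : Prop :=
  DifferentiableOn ℂ f (ball (0:ℂ) 1) ∧
  (∃ M : ℝ, ∀ z ∈ ball (0:ℂ) 1, ‖f z‖ ≤ M) ∧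
  (∃ M : ℝ, ∀ z ∈ ball (0:ℂ) 1, ‖iteratedDeriv N f z‖ ≤ M)

/-- `θ` is an inner function: bounded and analytic on `𝔻`, with radial limits of
modulus `1` at almost every boundary point. -/
def IsInner (θ : ℂ → ℂ) : Prop :=
  DifferentiableOn ℂ θ (ball (0:ℂ) 1) ∧
  (∃ M : ℝ, ∀ z ∈ ball (0:ℂ) 1, ‖θ z‖ ≤ M) ∧
  (∀ᵐ t : ℝ ∂volume,
    Tendsto (fun r : ℝ => ‖θ ((r : ℂ) * Complex.exp ((t : ℂ) * Complex.I))‖)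
      (nhdsWithin 1 (Set.Iio 1)) (nhds 1))

/-- The Blaschke product with zero sequence `zs`. -/
def blaschkeProd (zs : ℕ → ℂ) (z : ℂ) : ℂ :=
  ∏' j, ((starRingEnd ℂ) (zs j) / ((‖zs j‖ : ℝ) : ℂ)) *
    ((zs j - z) / (1 - (starRingEnd ℂ) (zs j) * z))

/-- `dsep zs j = inf_{l ≠ j} |z_j - z_l|`. -/
def dsep (zs : ℕ → ℂ) (j : ℕ) : ℝ :=
  ⨅ l : {l : ℕ // l ≠ j}, ‖zs j - zs l.1‖

/-- The pseudohyperbolic distance `ρ(z,w) = |z - w| / |1 - conj w * z|`. -/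
def pseudoDist (z w : ℂ) : ℝ :=
  ‖z - w‖ / ‖1 - (starRingEnd ℂ) w * z‖

/-- `X` is an ideal subspace of the space of functions on `𝔻` described by the predicate `Y`. -/
def IsIdealSubspace (Y : (ℂ → ℂ) → Prop) (X : Set (ℂ → ℂ)) : Prop :=
  ∀ f ∈ X, ∀ g : ℂ → ℂ, Y g →
    (∀ z ∈ ball (0:ℂ) 1, ‖g z‖ ≤ ‖f z‖) → g ∈ X

/-- `(φ_0, …, φ_n)` is an `α`-admissible jet on `E`. -/
def AdmissibleJet (α : ℝ) (n : ℕ) (E : Set ℂ) (φ : ℕ → ℂ → ℂ) : Prop :=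
  ∃ C : ℝ, ∀ z ∈ E, ∀ w ∈ E, ∀ s ≤ n,
    ‖φ s z -
        ∑ m ∈ Finset.range (n - s + 1), φ (s + m) w * (z - w) ^ m / (Nat.factorial m : ℂ)‖ ≤
      C * ‖z - w‖ ^ (α - (s : ℝ))

/-- `E` is an `A^α`-interpolating set (here `n = ⌊α⌋`): every `α`-admissible jet on `E`
is the jet of derivatives (within the closed disk) of some function in `A^α`. -/
def IsAInterpSet (α : ℝ) (n : ℕ) (E : Set ℂ) : Prop :=
  IsClosed E ∧ E ⊆ closedBall (0:ℂ) 1 ∧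
  ∀ φ : ℕ → ℂ → ℂ, AdmissibleJet α n E φ →
    ∃ g : ℂ → ℂ, MemA α g ∧
      ∀ s ≤ n, ∀ z ∈ E, iteratedDerivWithin s g (closedBall (0:ℂ) 1) z = φ s z

/-- `E` is an `H^∞_1`-interpolating set: every Lipschitz function on `E` extends to
a function in `H^∞_1`. -/
def IsH1InterpSet (E : Set ℂ) : Prop :=
  IsClosed E ∧ E ⊆ closedBall (0:ℂ) 1 ∧
  ∀ φ : ℂ → ℂ,
    (∃ C : ℝ, ∀ z ∈ E, ∀ w ∈ E, ‖φ z - φ w‖ ≤ C * ‖z - w‖) →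
    ∃ f : ℂ → ℂ, MemH 1 f ∧ ∀ z ∈ E, f z = φ z

/-- The ideal `J_k = {f ∈ A^α : f B^k ∈ A^α}`. -/
def Jset (α : ℝ) (B : ℂ → ℂ) (k : ℕ) : Set (ℂ → ℂ) :=
  {f | MemA α f ∧ MemA α (fun z => f z * (B z) ^ k)}

/-- The ideal `I_k = {f ∈ H^∞_{N} : f B^k ∈ H^∞_{N}}`. -/
def Iset (N : ℕ) (B : ℂ → ℂ) (k : ℕ) : Set (ℂ → ℂ) :=
  {f | MemH N f ∧ MemH N (fun z => f z * (B z) ^ k)}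

/-- Arclength measure on the unit circle `𝕋 ⊆ ℂ`. -/
def arcMeasure : Measure ℂ :=
  Measure.map (fun t : ℝ => Complex.exp ((t : ℂ) * Complex.I))
    (volume.restrict (Set.Ico 0 (2 * Real.pi)))

/-- `S` is a singular inner function: `S = exp(-∫ (ζ+z)/(ζ-z) dμ(ζ))` for some finite
nonnegative measure `μ` on the unit circle which is singular with respect to arclength. -/
def IsSingularInner (S : ℂ → ℂ) : Prop :=
  ∃ μ : Measure ℂ, IsFiniteMeasure μ ∧
    μ (Set.univ \ sphere (0:ℂ) 1) = 0 ∧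
    μ.MutuallySingular arcMeasure ∧
    ∀ z ∈ ball (0:ℂ) 1, S z = Complex.exp (-∫ ζ, (ζ + z) / (ζ - z) ∂μ)

/-!
Writing `x_t = k + t`, the entry `1/(k+t-s)!` equals `x_t (x_t - 1) ⋯ (x_t - s + 1) / x_t!`.
After pulling the factor `1/x_t!` out of each column, row `s` is the monic falling-factorial
polynomial of degree `s` evaluated at the distinct nodes `x_t`, so the determinant is a nonzero
multiple of the Vandermonde determinant of the `x_t`.
-/

open Matrix Polynomial Nat

theorem Matrix.det_of_descPochhammer_eval_ne_zero {R : Type*} [CommRing R] [IsDomain R] {m : ℕ}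
    {v : Fin m → R} (hv : Function.Injective v) :
    (of fun i j : Fin m => (descPochhammer R j).eval (v i)).det ≠ 0 := by
  rw [← det_eval_matrixOfPolynomials_eq_det_vandermonde v _
    (fun j => descPochhammer_natDegree R j) (fun j => monic_descPochhammer R j)]
  exact det_vandermonde_ne_zero_iff.mpr hv

theorem Nat.one_div_factorial_sub {K : Type*} [Field K] [CharZero K] {a s : ℕ} (h : s ≤ a) :
    (1 : K) / (a - s)! = 1 / a ! * a.descFactorial s := by
  rw [← factorial_mul_descFactorial h]
  push_cast
  field_simp [(descFactorial_pos.mpr h).ne']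

theorem factorial_matrix_det_ne_zero_general
    (k n : ℕ) (h1 : n < 2 * k) :
    (Matrix.of fun s t : Fin (n - k + 1) =>
      (1 : ℝ) / (Nat.factorial (k + t.val - s.val) : ℝ)).det ≠ 0 := by
  set x : Fin (n - k + 1) → ℝ := fun t => ((k + t.val : ℕ) : ℝ)
  have hcolumns : (of fun s t : Fin (n - k + 1) => (1 : ℝ) / (k + t.val - s.val)!) =
      of fun s t => 1 / ((k + t.val)! : ℝ) *
        (of fun t s : Fin (n - k + 1) => (descPochhammer ℝ s).eval (x t))ᵀ s t := by
    ext s t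
    have hs : s.val ≤ k + t.val := by have := s.isLt; omega
    simp only [of_apply, transpose_apply, x, descPochhammer_eval_eq_descFactorial]
    exact one_div_factorial_sub hs
  have hx : Function.Injective x := fun i j hij =>
    Fin.ext (by simpa [x] using hij)
  rw [hcolumns, det_mul_row, det_transpose]
  exact mul_ne_zero (Finset.prod_ne_zero_iff.mpr fun t _ => by positivity)
    (det_of_descPochhammer_eval_ne_zero hx)

/-- The `(n-k+1) × (n-k+1)` matrix with entries `1/(k+t-s)!` (for `n/2 < k ≤ n`)
is nonsingular. -/
theorem factorial_matrix_det_ne_zero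
    (k n : ℕ) (h1 : n < 2 * k) (h2 : k ≤ n) :
    (Matrix.of fun s t : Fin (n - k + 1) =>
      (1 : ℝ) / (Nat.factorial (k + t.val - s.val) : ℝ)).det ≠ 0 :=
  factorial_matrix_det_ne_zero_general k n h1
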